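/- The space X = ([0,1] × {0}) ∪ {(1/2, 1/m) : m ∈ ℕ, m ≥ 1} of the preceding construction is not n-Hausdorff for any finite n ≥ 2: for each n, the n-element set {(1/2,0)} ∪ {(1/2,1/m) : 1 ≤ m ≤ n−1} admits no choice of open neighborhoods with empty intersection. -/

import Mathlib

open Set

/-- `X` is `τ`-Hausdorff: every subset `A` with `|A| ≥ τ` admits open neighborhoods
of its points with empty intersection. -/
def NHausdorff (X : Type*) [TopologicalSpace X] (τ : Cardinal) : Prop :=
  ∀ A : Set X, τ ≤ Cardinal.mk A →
    ∃ U : X → Set X, (∀ a ∈ A, IsOpen (U a) ∧ a ∈ U a) ∧ (⋂ a ∈ A, U a) = ∅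

/-- `X = ([0,1] × {0}) ∪ {(1/2, 1/m) : m ∈ ℕ, m ≥ 1}`. -/
def Sw : Set (ℝ × ℝ) :=
  (Set.Icc (0 : ℝ) 1 ×ˢ {(0 : ℝ)}) ∪ {p | ∃ m : ℕ, 1 ≤ m ∧ p = ((1/2 : ℝ), 1/(m : ℝ))}

/-- The basic neighborhood `U_k((1/2, 1/m))`:
`{(1/2,1/m)} ∪ (((1/2 − 1/k, 1/2 + 1/k) \ {1/2}) × {0})`. -/
def Uw (m k : ℕ) : Set Sw :=
  {p : Sw | (p : ℝ × ℝ) = (1/2, 1/(m : ℝ)) ∨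
    ((p : ℝ × ℝ).2 = 0 ∧ (p : ℝ × ℝ).1 ∈ Set.Ioo (1/2 - 1/(k : ℝ)) (1/2 + 1/(k : ℝ)) ∧
      (p : ℝ × ℝ).1 ≠ 1/2)}

/-- Traces on the line `[0,1] × {0}` of Euclidean open sets. -/
def lineOpensw : Set (Set Sw) :=
  {V | ∃ W : Set ℝ, IsOpen W ∧ V = {p : Sw | (p : ℝ × ℝ).2 = 0 ∧ (p : ℝ × ℝ).1 ∈ W}}

/-- The topology on `Sw`: Euclidean neighborhoods on the line, and the `U_k((1/2,1/m))`
as neighborhood bases at the special points. -/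
def Twex : TopologicalSpace Sw :=
  TopologicalSpace.generateFrom
    (lineOpensw ∪ {V | ∃ m k : ℕ, 1 ≤ m ∧ 1 ≤ k ∧ V = Uw m k})

/-!
Every open set containing a point `(1/2, y)` of `X` contains a punctured neighbourhood of `1/2`
on the line `[0,1] × {0}`, so finitely many open sets around such points always meet near
`(1/2, 0)`. The points `(1/2, 0), (1/2, 1), …, (1/2, 1/(n-1))` are `n` of them.
-/

open Filter Topology

/-- Because `1 / (0 : ℝ) = 0`, `halfPt 0` is the point `(1/2, 0)` of the line, and the other
`halfPt m` are the points `(1/2, 1/m)` off the line. -/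
noncomputable def halfPt (m : ℕ) : Sw :=
  ⟨(1/2, 1/(m : ℝ)), by
    rcases Nat.eq_zero_or_pos m with rfl | hm
    · exact Or.inl ⟨⟨by norm_num, by norm_num⟩, by simp⟩
    · exact Or.inr ⟨m, hm, rfl⟩⟩

lemma halfPt_injective : Function.Injective halfPt := fun i j h => by
  simpa [halfPt] using congrArg (fun p : Sw => (p : ℝ × ℝ).2) h

lemma fst_halfPt (m : ℕ) : (halfPt m : ℝ × ℝ).1 = 1/2 := rfl

lemma setOf_eq_image_halfPt (n : ℕ) :
    {p : Sw | (p : ℝ × ℝ) = (1/2, 0) ∨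
      ∃ m : ℕ, 1 ≤ m ∧ m ≤ n - 1 ∧ (p : ℝ × ℝ) = (1/2, 1/(m : ℝ))} = halfPt '' Iic (n - 1) := by
  ext p
  constructor
  · rintro (hp | ⟨m, -, hm, hp⟩)
    · exact ⟨0, Nat.zero_le _, Subtype.ext (by simp [halfPt, hp])⟩
    · exact ⟨m, hm, Subtype.ext hp.symm⟩
  · rintro ⟨m, hm, rfl⟩
    rcases Nat.eq_zero_or_pos m with rfl | hm0
    · exact Or.inl (by simp [halfPt])
    · exact Or.inr ⟨m, hm0, hm, rfl⟩

lemma le_mk_image_halfPt (n : ℕ) : (n : Cardinal) ≤ Cardinal.mk (halfPt '' Iic (n - 1)) := by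
  have hinj : Function.Injective (halfPt ∘ Fin.val : Fin n → Sw) :=
    halfPt_injective.comp Fin.val_injective
  calc (n : Cardinal) = Cardinal.mk (range (halfPt ∘ Fin.val : Fin n → Sw)) := by
        rw [Cardinal.mk_range_eq _ hinj, Cardinal.mk_fin]
    _ ≤ Cardinal.mk (halfPt '' Iic (n - 1)) := by
        refine Cardinal.mk_le_mk_of_subset ?_
        rintro _ ⟨i, rfl⟩
        exact ⟨i, Nat.le_sub_one_of_lt i.2, rfl⟩

lemma eventually_mem_of_isOpen {V : Set Sw} (hV : IsOpen[Twex] V) {p : Sw} (hp : p ∈ V)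
    (hp1 : (p : ℝ × ℝ).1 = 1/2) :
    ∀ᶠ x in 𝓝[≠] (1/2 : ℝ), ∀ h : ((x, 0) : ℝ × ℝ) ∈ Sw, (⟨(x, 0), h⟩ : Sw) ∈ V := by
  induction hV with
  | basic V hVb =>
    rcases hVb with ⟨W, hW, rfl⟩ | ⟨m, k, -, hk, rfl⟩
    · have hW' : W ∈ 𝓝 (1/2 : ℝ) := hW.mem_nhds (hp1 ▸ hp.2)
      filter_upwards [nhdsWithin_le_nhds hW'] with x hx _ using ⟨rfl, hx⟩
    · have hk' : (0 : ℝ) < 1/(k : ℝ) := by positivity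
      have hIoo : Ioo (1/2 - 1/(k : ℝ)) (1/2 + 1/k) ∈ 𝓝 (1/2 : ℝ) :=
        Ioo_mem_nhds (by linarith) (by linarith)
      filter_upwards [nhdsWithin_le_nhds hIoo, self_mem_nhdsWithin] with x hx hne _
        using Or.inr ⟨rfl, hx, hne⟩
  | univ => exact Eventually.of_forall fun _ _ => trivial
  | inter s t _ _ ihs iht =>
    filter_upwards [ihs hp.1, iht hp.2] with x hs ht h using ⟨hs h, ht h⟩
  | sUnion S _ ih =>
    obtain ⟨t, htS, hpt⟩ := hp
    filter_upwards [ih t htS hpt] with x hx h using ⟨t, htS, hx h⟩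

lemma biInter_nonempty_of_fst_eq_half {A : Set Sw} (hA : A.Finite)
    (hA1 : ∀ a ∈ A, (a : ℝ × ℝ).1 = 1/2) {U : Sw → Set Sw}
    (hU : ∀ a ∈ A, IsOpen[Twex] (U a) ∧ a ∈ U a) : (⋂ a ∈ A, U a).Nonempty := by
  have hline : ∀ᶠ x in 𝓝[≠] (1/2 : ℝ), x ∈ Icc (0 : ℝ) 1 :=
    nhdsWithin_le_nhds (Icc_mem_nhds (by norm_num) (by norm_num))
  have hall := (hA.eventually_all).2 fun a ha => eventually_mem_of_isOpen (hU a ha).1 (hU a ha).2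
    (hA1 a ha)
  obtain ⟨x, hx, hxU⟩ := (hline.and hall).exists
  have hxSw : ((x, 0) : ℝ × ℝ) ∈ Sw := Or.inl ⟨hx, rfl⟩
  exact ⟨⟨(x, 0), hxSw⟩, mem_iInter₂.2 fun a ha => hxU a ha hxSw⟩

theorem stmt_17_general (n : ℕ) :
    ¬ @NHausdorff Sw Twex n ∧
    ¬ ∃ U : Sw → Set Sw,
        (∀ a ∈ {p : Sw | (p : ℝ × ℝ) = (1/2, 0) ∨
            ∃ m : ℕ, 1 ≤ m ∧ m ≤ n - 1 ∧ (p : ℝ × ℝ) = (1/2, 1/(m : ℝ))},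
          Twex.IsOpen (U a) ∧ a ∈ U a) ∧
        (⋂ a ∈ {p : Sw | (p : ℝ × ℝ) = (1/2, 0) ∨
            ∃ m : ℕ, 1 ≤ m ∧ m ≤ n - 1 ∧ (p : ℝ × ℝ) = (1/2, 1/(m : ℝ))}, U a) = ∅ := by
  rw [setOf_eq_image_halfPt]
  have hinseparable : ¬ ∃ U : Sw → Set Sw,
      (∀ a ∈ halfPt '' Iic (n - 1), IsOpen[Twex] (U a) ∧ a ∈ U a) ∧
        (⋂ a ∈ halfPt '' Iic (n - 1), U a) = ∅ := by
    rintro ⟨U, hU, hempty⟩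
    refine (biInter_nonempty_of_fst_eq_half ((finite_Iic _).image _) ?_ hU).ne_empty hempty
    rintro _ ⟨m, -, rfl⟩
    exact fst_halfPt m
  exact ⟨fun h => hinseparable (h _ (le_mk_image_halfPt n)), hinseparable⟩

theorem stmt_17 (n : ℕ) (hn : 2 ≤ n) :
    ¬ @NHausdorff Sw Twex n ∧
    ¬ ∃ U : Sw → Set Sw,
        (∀ a ∈ {p : Sw | (p : ℝ × ℝ) = (1/2, 0) ∨
            ∃ m : ℕ, 1 ≤ m ∧ m ≤ n - 1 ∧ (p : ℝ × ℝ) = (1/2, 1/(m : ℝ))},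
          Twex.IsOpen (U a) ∧ a ∈ U a) ∧
        (⋂ a ∈ {p : Sw | (p : ℝ × ℝ) = (1/2, 0) ∨
            ∃ m : ℕ, 1 ≤ m ∧ m ≤ n - 1 ∧ (p : ℝ × ℝ) = (1/2, 1/(m : ℝ))}, U a) = ∅ :=
  stmt_17_general n
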